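/- CFR cumulative full regret bound in discounted continuing MDPs: let (π^t)_{t=1}^T be a sequence of stationary policies and (r^t)_{t=1}^T a sequence of reward functions bounded by r̄ such that the state-local cumulative advantages are bounded by C^T, i.e., Σ_{t=1}^T ρ_s(a, π^t; r^t) ≤ C^T for every state s and action a. Then for every stationary policy π, the cumulative full regret from the initial state distribution satisfies Σ_{t=1}^T ( v_∅(π; r^t) - v_∅(π^t; r^t) ) ≤ C^T / (1-γ). -/
import Mathlib


open scoped BigOperators
open MeasureTheory

/-- A finite discounted Markov decision process `(S, A, p, d_∅, γ)`. -/
structure MDP (S A : Type) [Fintype S] [Fintype A] [DecidableEq S] where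
  /-- transition probabilities `p(s' | s, a)` -/
  p : S → A → S → ℝ
  p_nonneg : ∀ s a s', 0 ≤ p s a s'
  p_sum_one : ∀ s a, ∑ s', p s a s' = 1
  /-- initial state distribution `d_∅` -/
  d0 : S → ℝ
  d0_nonneg : ∀ s, 0 ≤ d0 s
  d0_sum_one : ∑ s, d0 s = 1
  /-- discount factor `γ ∈ [0, 1)` -/
  γ : ℝ
  γ_nonneg : 0 ≤ γ
  γ_lt_one : γ < 1

/-- A stationary policy: a probability distribution `π(·|s)` over actions for each state. -/
structure Policy (S A : Type) [Fintype A] where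
  prob : S → A → ℝ
  nonneg : ∀ s a, 0 ≤ prob s a
  sum_one : ∀ s, ∑ a, prob s a = 1

variable {S A : Type} [Fintype S] [Fintype A] [DecidableEq S]

/-- Distribution of the state `S_i` at time `i` of the Markov chain induced by policy `π`
started at `S_0 = s`. -/
def MDP.stepDist (M : MDP S A) (π : Policy S A) (s : S) : ℕ → S → ℝ
  | 0 => fun s' => if s' = s then 1 else 0
  | i + 1 => fun s' => ∑ s₀ : S, ∑ a : A, M.stepDist π s i s₀ * π.prob s₀ a * M.p s₀ a s'

/-- Expected reward `E[r(S_i, A_{i+1}, S_{i+1})]` at step `i` of the chain induced by `π`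
started at `S_0 = s`. -/
def MDP.expReward (M : MDP S A) (π : Policy S A) (r : S → A → S → ℝ) (s : S) (i : ℕ) : ℝ :=
  ∑ s₀ : S, ∑ a : A, ∑ s' : S, M.stepDist π s i s₀ * π.prob s₀ a * M.p s₀ a s' * r s₀ a s'

/-- The normalized `γ`-discounted expected return
`v_s(π; r) = (1-γ) E[Σ_{i=0}^∞ γ^i r(S_i, A_{i+1}, S_{i+1})]`. -/
noncomputable def MDP.v (M : MDP S A) (π : Policy S A) (r : S → A → S → ℝ) (s : S) : ℝ :=
  (1 - M.γ) * ∑' i : ℕ, M.γ ^ i * M.expReward π r s i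

/-- Expected reward at step `i` of the chain started at `S_0 = s`, conditioned on `A_1 = a`,
following `π` thereafter. -/
def MDP.expRewardQ (M : MDP S A) (π : Policy S A) (r : S → A → S → ℝ) (s : S) (a : A) :
    ℕ → ℝ
  | 0 => ∑ s' : S, M.p s a s' * r s a s'
  | i + 1 => ∑ s' : S, M.p s a s' * M.expReward π r s' i

/-- The normalized `γ`-discounted expected return `q_s(a, π; r)` for taking action `a` in
state `s` and following `π` thereafter. -/
noncomputable def MDP.q (M : MDP S A) (π : Policy S A) (r : S → A → S → ℝ) (s : S) (a : A) :
    ℝ :=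
  (1 - M.γ) * ∑' i : ℕ, M.γ ^ i * M.expRewardQ π r s a i

/-- The (normalized) advantage `ρ_s(a, π; r) = q_s(a, π; r) - v_s(π; r)`. -/
noncomputable def MDP.adv (M : MDP S A) (π : Policy S A) (r : S → A → S → ℝ) (s : S)
    (a : A) : ℝ :=
  M.q π r s a - M.v π r s

/-- The normalized `γ`-discounted expected return from the initial state distribution,
`v_∅(π; r) = E_{S_0 ~ d_∅}[v_{S_0}(π; r)]`. -/
noncomputable def MDP.vInit (M : MDP S A) (π : Policy S A) (r : S → A → S → ℝ) : ℝ :=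
  ∑ s : S, M.d0 s * M.v π r s

/-- The `γ`-discounted future state distribution
`d_s(s'; π) = (1-γ) E[Σ_{i=0}^∞ γ^i 1[S_i = s']]` induced by `π` from `s`. -/
noncomputable def MDP.futureDist (M : MDP S A) (π : Policy S A) (s s' : S) : ℝ :=
  (1 - M.γ) * ∑' i : ℕ, M.γ ^ i * M.stepDist π s i s'

namespace MDP
variable (M : MDP S A) (π : Policy S A)

lemma stepDist_nonneg (s : S) : ∀ (i : ℕ) (s' : S), 0 ≤ M.stepDist π s i s'
  | 0, s' => by simp only [stepDist]; split <;> norm_num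
  | i + 1, s' => by
      simp only [stepDist]
      refine Finset.sum_nonneg fun s₀ _ => Finset.sum_nonneg fun a _ => ?_
      exact mul_nonneg (mul_nonneg (stepDist_nonneg s i s₀) (π.nonneg _ _)) (M.p_nonneg _ _ _)

lemma stepDist_sum_one (s : S) : ∀ i : ℕ, ∑ s', M.stepDist π s i s' = 1
  | 0 => by simp [stepDist]
  | i + 1 => by
      simp only [stepDist]
      rw [Finset.sum_comm]
      have : ∀ s₀ ∈ Finset.univ, ∑ s' : S, ∑ a : A,
          M.stepDist π s i s₀ * π.prob s₀ a * M.p s₀ a s' = M.stepDist π s i s₀ := by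
        intro s₀ _
        rw [Finset.sum_comm]
        have : ∀ a ∈ Finset.univ, ∑ s' : S, M.stepDist π s i s₀ * π.prob s₀ a * M.p s₀ a s'
            = M.stepDist π s i s₀ * π.prob s₀ a := by
          intro a _
          rw [← Finset.mul_sum, M.p_sum_one, mul_one]
        rw [Finset.sum_congr rfl this, ← Finset.mul_sum, π.sum_one, mul_one]
      rw [Finset.sum_congr rfl this, stepDist_sum_one s i]

end MDP
/-- One-step state kernel of policy `π`. -/
def MDP.kernel (M : MDP S A) (π : Policy S A) (s s' : S) : ℝ :=
  ∑ a, π.prob s a * M.p s a s'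

/-- One-step expected reward. -/
def MDP.rOne (M : MDP S A) (π : Policy S A) (r : S → A → S → ℝ) (s : S) : ℝ :=
  ∑ a, ∑ s', π.prob s a * M.p s a s' * r s a s'

namespace MDP
variable (M : MDP S A) (π : Policy S A)

lemma kernel_nonneg (s s' : S) : 0 ≤ M.kernel π s s' :=
  Finset.sum_nonneg fun a _ => mul_nonneg (π.nonneg _ _) (M.p_nonneg _ _ _)

lemma kernel_sum_one (s : S) : ∑ s', M.kernel π s s' = 1 := by
  rw [show ∑ s', M.kernel π s s' = ∑ a, ∑ s', π.prob s a * M.p s a s' from Finset.sum_comm]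
  calc ∑ a, ∑ s', π.prob s a * M.p s a s'
      = ∑ a, π.prob s a := by
        refine Finset.sum_congr rfl fun a _ => ?_
        rw [← Finset.mul_sum, M.p_sum_one, mul_one]
    _ = 1 := π.sum_one s

lemma stepDist_succ_right (s : S) (i : ℕ) (s' : S) :
    M.stepDist π s (i + 1) s' = ∑ s₀, M.stepDist π s i s₀ * M.kernel π s₀ s' := by
  simp only [stepDist, kernel, Finset.mul_sum]
  exact Finset.sum_congr rfl fun s₀ _ => Finset.sum_congr rfl fun a _ => by ring

lemma stepDist_succ_left (s : S) :
    ∀ (i : ℕ) (s'' : S), M.stepDist π s (i + 1) s''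
      = ∑ s', M.kernel π s s' * M.stepDist π s' i s''
  | 0, s'' => by
      rw [stepDist_succ_right]
      simp [stepDist, mul_comm]
  | i + 1, s'' => by
      rw [stepDist_succ_right]
      calc ∑ s₀, M.stepDist π s (i + 1) s₀ * M.kernel π s₀ s''
          = ∑ s₀, (∑ s', M.kernel π s s' * M.stepDist π s' i s₀) * M.kernel π s₀ s'' := by
            refine Finset.sum_congr rfl fun s₀ _ => ?_
            rw [stepDist_succ_left s i s₀]
        _ = ∑ s', M.kernel π s s' * ∑ s₀, M.stepDist π s' i s₀ * M.kernel π s₀ s'' := by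
            simp only [Finset.sum_mul, Finset.mul_sum]
            rw [Finset.sum_comm]
            exact Finset.sum_congr rfl fun _ _ => Finset.sum_congr rfl fun _ _ => by ring
        _ = ∑ s', M.kernel π s s' * M.stepDist π s' (i + 1) s'' := by
            refine Finset.sum_congr rfl fun s' _ => ?_
            rw [stepDist_succ_right]

lemma expReward_eq (r : S → A → S → ℝ) (s : S) (i : ℕ) :
    M.expReward π r s i = ∑ s₀, M.stepDist π s i s₀ * M.rOne π r s₀ := by
  simp only [expReward, rOne, Finset.mul_sum]
  exact Finset.sum_congr rfl fun s₀ _ => Finset.sum_congr rfl fun a _ =>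
    Finset.sum_congr rfl fun s' _ => by ring

lemma expReward_zero (r : S → A → S → ℝ) (s : S) :
    M.expReward π r s 0 = M.rOne π r s := by
  rw [expReward_eq]
  simp [stepDist]

lemma expReward_succ (r : S → A → S → ℝ) (s : S) (i : ℕ) :
    M.expReward π r s (i + 1) = ∑ s', M.kernel π s s' * M.expReward π r s' i := by
  rw [expReward_eq]
  calc ∑ s₀, M.stepDist π s (i + 1) s₀ * M.rOne π r s₀
      = ∑ s₀, (∑ s', M.kernel π s s' * M.stepDist π s' i s₀) * M.rOne π r s₀ := by
        refine Finset.sum_congr rfl fun s₀ _ => ?_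
        rw [stepDist_succ_left]
    _ = ∑ s', M.kernel π s s' * ∑ s₀, M.stepDist π s' i s₀ * M.rOne π r s₀ := by
        simp only [Finset.sum_mul, Finset.mul_sum]
        rw [Finset.sum_comm]
        exact Finset.sum_congr rfl fun _ _ => Finset.sum_congr rfl fun _ _ => by ring
    _ = _ := by
        refine Finset.sum_congr rfl fun s' _ => ?_
        rw [expReward_eq]

lemma abs_rOne_le (r : S → A → S → ℝ) (rbar : ℝ) (hr : ∀ s a s', |r s a s'| ≤ rbar)
    (s : S) : |M.rOne π r s| ≤ rbar := by
  have step : ∀ a, |∑ s', π.prob s a * M.p s a s' * r s a s'| ≤ π.prob s a * rbar := by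
    intro a
    refine (Finset.abs_sum_le_sum_abs _ _).trans ?_
    calc ∑ s', |π.prob s a * M.p s a s' * r s a s'|
        ≤ ∑ s', π.prob s a * M.p s a s' * rbar := by
          refine Finset.sum_le_sum fun s' _ => ?_
          rw [abs_mul, abs_of_nonneg (mul_nonneg (π.nonneg _ _) (M.p_nonneg _ _ _))]
          exact mul_le_mul_of_nonneg_left (hr _ _ _)
            (mul_nonneg (π.nonneg _ _) (M.p_nonneg _ _ _))
      _ = π.prob s a * rbar := by
          rw [← Finset.sum_mul, ← Finset.mul_sum, M.p_sum_one, mul_one]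
  calc |M.rOne π r s| ≤ ∑ a, |∑ s', π.prob s a * M.p s a s' * r s a s'| :=
        Finset.abs_sum_le_sum_abs _ _
    _ ≤ ∑ a, π.prob s a * rbar := Finset.sum_le_sum fun a _ => step a
    _ = rbar := by rw [← Finset.sum_mul, π.sum_one, one_mul]

lemma abs_expReward_le (r : S → A → S → ℝ) (rbar : ℝ) (hrb : 0 ≤ rbar)
    (hr : ∀ s a s', |r s a s'| ≤ rbar) (s : S) (i : ℕ) : |M.expReward π r s i| ≤ rbar := by
  rw [expReward_eq]
  calc |∑ s₀, M.stepDist π s i s₀ * M.rOne π r s₀|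
      ≤ ∑ s₀, |M.stepDist π s i s₀ * M.rOne π r s₀| := Finset.abs_sum_le_sum_abs _ _
    _ ≤ ∑ s₀, M.stepDist π s i s₀ * rbar := by
        refine Finset.sum_le_sum fun s₀ _ => ?_
        rw [abs_mul, abs_of_nonneg (M.stepDist_nonneg π s i s₀)]
        exact mul_le_mul_of_nonneg_left (M.abs_rOne_le π r rbar hr s₀)
          (M.stepDist_nonneg π s i s₀)
    _ = rbar := by rw [← Finset.sum_mul, M.stepDist_sum_one, one_mul]

lemma abs_expRewardQ_le (r : S → A → S → ℝ) (rbar : ℝ) (hrb : 0 ≤ rbar)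
    (hr : ∀ s a s', |r s a s'| ≤ rbar) (s : S) (a : A) (i : ℕ) :
    |M.expRewardQ π r s a i| ≤ rbar := by
  obtain (_ | i) := i
  · calc |∑ s', M.p s a s' * r s a s'| ≤ ∑ s', |M.p s a s' * r s a s'| :=
        Finset.abs_sum_le_sum_abs _ _
      _ ≤ ∑ s', M.p s a s' * rbar := by
          refine Finset.sum_le_sum fun s' _ => ?_
          rw [abs_mul, abs_of_nonneg (M.p_nonneg _ _ _)]
          exact mul_le_mul_of_nonneg_left (hr _ _ _) (M.p_nonneg _ _ _)
      _ = rbar := by rw [← Finset.sum_mul, M.p_sum_one, one_mul]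
  · calc |∑ s', M.p s a s' * M.expReward π r s' i|
        ≤ ∑ s', |M.p s a s' * M.expReward π r s' i| := Finset.abs_sum_le_sum_abs _ _
      _ ≤ ∑ s', M.p s a s' * rbar := by
          refine Finset.sum_le_sum fun s' _ => ?_
          rw [abs_mul, abs_of_nonneg (M.p_nonneg _ _ _)]
          exact mul_le_mul_of_nonneg_left (M.abs_expReward_le π r rbar hrb hr s' i)
            (M.p_nonneg _ _ _)
      _ = rbar := by rw [← Finset.sum_mul, M.p_sum_one, one_mul]

lemma summable_geom_mul {f : ℕ → ℝ} (B : ℝ) (hf : ∀ i, |f i| ≤ B) :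
    Summable (fun i => M.γ ^ i * f i) := by
  have h0 : 0 ≤ M.γ := M.γ_nonneg
  refine Summable.of_abs (Summable.of_nonneg_of_le (fun i => abs_nonneg _) (fun i => ?_)
    (((summable_geometric_of_lt_one h0 M.γ_lt_one)).mul_right B))
  rw [abs_mul, abs_of_nonneg (pow_nonneg h0 i)]
  exact mul_le_mul_of_nonneg_left (hf i) (pow_nonneg h0 i)

lemma summable_v (r : S → A → S → ℝ) (rbar : ℝ) (hrb : 0 ≤ rbar)
    (hr : ∀ s a s', |r s a s'| ≤ rbar) (s : S) :
    Summable (fun i => M.γ ^ i * M.expReward π r s i) :=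
  M.summable_geom_mul rbar (M.abs_expReward_le π r rbar hrb hr s)

lemma summable_q (r : S → A → S → ℝ) (rbar : ℝ) (hrb : 0 ≤ rbar)
    (hr : ∀ s a s', |r s a s'| ≤ rbar) (s : S) (a : A) :
    Summable (fun i => M.γ ^ i * M.expRewardQ π r s a i) :=
  M.summable_geom_mul rbar (M.abs_expRewardQ_le π r rbar hrb hr s a)

lemma tsum_geom_mul_le {f : ℕ → ℝ} (B : ℝ) (hf : ∀ i, |f i| ≤ B) :
    |∑' i, M.γ ^ i * f i| ≤ (1 - M.γ)⁻¹ * B := by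
  have h0 : 0 ≤ M.γ := M.γ_nonneg
  have hs := M.summable_geom_mul B hf
  calc |∑' i, M.γ ^ i * f i| ≤ ∑' i, |M.γ ^ i * f i| := by
        have hs' : Summable fun i => ‖M.γ ^ i * f i‖ := by
          simp only [Real.norm_eq_abs]; exact hs.abs
        have h := norm_tsum_le_tsum_norm hs'
        simp only [Real.norm_eq_abs] at h
        exact h
    _ ≤ ∑' i : ℕ, M.γ ^ i * B := by
        refine Summable.tsum_le_tsum (fun i => ?_) hs.abs
          ((summable_geometric_of_lt_one h0 M.γ_lt_one).mul_right B)
        rw [abs_mul, abs_of_nonneg (pow_nonneg h0 i)]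
        exact mul_le_mul_of_nonneg_left (hf i) (pow_nonneg h0 i)
    _ = (1 - M.γ)⁻¹ * B := by
        rw [tsum_mul_right, tsum_geometric_of_lt_one h0 M.γ_lt_one]

lemma abs_v_le (r : S → A → S → ℝ) (rbar : ℝ) (hrb : 0 ≤ rbar)
    (hr : ∀ s a s', |r s a s'| ≤ rbar) (s : S) : |M.v π r s| ≤ rbar := by
  have h1 : (0:ℝ) < 1 - M.γ := by linarith [M.γ_lt_one]
  rw [v, abs_mul, abs_of_nonneg h1.le]
  calc (1 - M.γ) * |∑' i, M.γ ^ i * M.expReward π r s i|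
      ≤ (1 - M.γ) * ((1 - M.γ)⁻¹ * rbar) :=
        mul_le_mul_of_nonneg_left
          (M.tsum_geom_mul_le rbar (M.abs_expReward_le π r rbar hrb hr s)) h1.le
    _ = rbar := by field_simp

lemma abs_q_le (r : S → A → S → ℝ) (rbar : ℝ) (hrb : 0 ≤ rbar)
    (hr : ∀ s a s', |r s a s'| ≤ rbar) (s : S) (a : A) : |M.q π r s a| ≤ rbar := by
  have h1 : (0:ℝ) < 1 - M.γ := by linarith [M.γ_lt_one]
  rw [q, abs_mul, abs_of_nonneg h1.le]
  calc (1 - M.γ) * |∑' i, M.γ ^ i * M.expRewardQ π r s a i|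
      ≤ (1 - M.γ) * ((1 - M.γ)⁻¹ * rbar) :=
        mul_le_mul_of_nonneg_left
          (M.tsum_geom_mul_le rbar (M.abs_expRewardQ_le π r rbar hrb hr s a)) h1.le
    _ = rbar := by field_simp


end MDP
namespace MDP
variable (M : MDP S A) (π : Policy S A)

lemma v_bellman (r : S → A → S → ℝ) (rbar : ℝ) (hrb : 0 ≤ rbar)
    (hr : ∀ s a s', |r s a s'| ≤ rbar) (s : S) :
    M.v π r s = (1 - M.γ) * M.rOne π r s + M.γ * ∑ s', M.kernel π s s' * M.v π r s' := by
  have hsum : ∀ s, Summable (fun i => M.γ ^ i * M.expReward π r s i) :=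
    fun s => M.summable_v π r rbar hrb hr s
  have key : ∑' i, M.γ ^ i * M.expReward π r s i
      = M.rOne π r s + M.γ * ∑ s', M.kernel π s s'
        * ∑' i, M.γ ^ i * M.expReward π r s' i := by
    rw [Summable.tsum_eq_zero_add (hsum s)]
    congr 1
    · simp [M.expReward_zero π r s]
    have h1 : ∀ i : ℕ, M.γ ^ (i + 1) * M.expReward π r s (i + 1)
        = ∑ s', (M.γ * M.kernel π s s') * (M.γ ^ i * M.expReward π r s' i) := by
      intro i
      rw [M.expReward_succ π r s i, Finset.mul_sum]
      exact Finset.sum_congr rfl fun s' _ => by ring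
    rw [tsum_congr h1, Summable.tsum_finsetSum (fun s' _ => (hsum s').mul_left _)]
    rw [Finset.mul_sum]
    exact Finset.sum_congr rfl fun s' _ => by rw [tsum_mul_left]; ring
  rw [v, key]
  have : ∀ s', M.kernel π s s' * M.v π r s'
      = (1 - M.γ) * (M.kernel π s s' * ∑' i, M.γ ^ i * M.expReward π r s' i) := by
    intro s'; rw [v]; ring
  rw [Finset.sum_congr rfl fun s' _ => this s', ← Finset.mul_sum]
  ring

lemma q_bellman (r : S → A → S → ℝ) (rbar : ℝ) (hrb : 0 ≤ rbar)
    (hr : ∀ s a s', |r s a s'| ≤ rbar) (s : S) (a : A) :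
    M.q π r s a = (1 - M.γ) * (∑ s', M.p s a s' * r s a s')
      + M.γ * ∑ s', M.p s a s' * M.v π r s' := by
  have hsum : ∀ s, Summable (fun i => M.γ ^ i * M.expReward π r s i) :=
    fun s => M.summable_v π r rbar hrb hr s
  have key : ∑' i, M.γ ^ i * M.expRewardQ π r s a i
      = (∑ s', M.p s a s' * r s a s') + M.γ * ∑ s', M.p s a s'
          * ∑' i, M.γ ^ i * M.expReward π r s' i := by
    rw [Summable.tsum_eq_zero_add (M.summable_q π r rbar hrb hr s a)]
    congr 1
    · simp [expRewardQ]
    have h1 : ∀ i : ℕ, M.γ ^ (i + 1) * M.expRewardQ π r s a (i + 1)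
        = ∑ s', (M.γ * M.p s a s') * (M.γ ^ i * M.expReward π r s' i) := by
      intro i
      show M.γ ^ (i + 1) * (∑ s', M.p s a s' * M.expReward π r s' i) = _
      rw [Finset.mul_sum]
      exact Finset.sum_congr rfl fun s' _ => by ring
    rw [tsum_congr h1, Summable.tsum_finsetSum (fun s' _ => (hsum s').mul_left _)]
    rw [Finset.mul_sum]
    exact Finset.sum_congr rfl fun s' _ => by rw [tsum_mul_left]; ring
  rw [q, key]
  have : ∀ s', M.p s a s' * M.v π r s'
      = (1 - M.γ) * (M.p s a s' * ∑' i, M.γ ^ i * M.expReward π r s' i) := by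
    intro s'; rw [v]; ring
  rw [Finset.sum_congr rfl fun s' _ => this s', ← Finset.mul_sum]
  ring

/-- Key single-step recursion for the value difference. -/
lemma diff_rec (π' : Policy S A) (r : S → A → S → ℝ) (rbar : ℝ) (hrb : 0 ≤ rbar)
    (hr : ∀ s a s', |r s a s'| ≤ rbar) (s : S) :
    M.v π r s - M.v π' r s = (∑ a, π.prob s a * M.adv π' r s a)
      + M.γ * ∑ s', M.kernel π s s' * (M.v π r s' - M.v π' r s') := by
  have h1 := M.v_bellman π r rbar hrb hr s
  have h2 : ∑ a, π.prob s a * M.adv π' r s a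
      = (1 - M.γ) * M.rOne π r s + M.γ * (∑ s', M.kernel π s s' * M.v π' r s')
        - M.v π' r s := by
    have e1 : ∀ a, π.prob s a * M.adv π' r s a
        = (1 - M.γ) * (∑ s', π.prob s a * (M.p s a s' * r s a s'))
          + M.γ * (∑ s', π.prob s a * (M.p s a s' * M.v π' r s'))
          - π.prob s a * M.v π' r s := by
      intro a
      rw [adv, M.q_bellman π' r rbar hrb hr s a, ← Finset.mul_sum, ← Finset.mul_sum]
      ring
    rw [Finset.sum_congr rfl fun a _ => e1 a]
    rw [Finset.sum_sub_distrib, Finset.sum_add_distrib, ← Finset.mul_sum, ← Finset.mul_sum,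
      ← Finset.sum_mul, π.sum_one, one_mul]
    have g1 : ∑ a, ∑ s', π.prob s a * (M.p s a s' * r s a s') = M.rOne π r s := by
      rw [rOne]
      exact Finset.sum_congr rfl fun a _ => Finset.sum_congr rfl fun s' _ => by ring
    have g2 : ∑ a, ∑ s', π.prob s a * (M.p s a s' * M.v π' r s')
        = ∑ s', M.kernel π s s' * M.v π' r s' := by
      rw [show (∑ a, ∑ s', π.prob s a * (M.p s a s' * M.v π' r s'))
          = ∑ s', ∑ a, π.prob s a * (M.p s a s' * M.v π' r s') from Finset.sum_comm]
      refine Finset.sum_congr rfl fun s' _ => ?_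
      rw [kernel, Finset.sum_mul]
      exact Finset.sum_congr rfl fun a _ => by ring
    rw [g1, g2]
  have h3 : ∑ s', M.kernel π s s' * (M.v π r s' - M.v π' r s')
      = (∑ s', M.kernel π s s' * M.v π r s') - ∑ s', M.kernel π s s' * M.v π' r s' := by
    rw [← Finset.sum_sub_distrib]
    exact Finset.sum_congr rfl fun s' _ => by ring
  rw [h2, h3]
  rw [h1]
  ring

/-- Finite unrolling of the value difference. -/
lemma unroll (π' : Policy S A) (r : S → A → S → ℝ) (rbar : ℝ) (hrb : 0 ≤ rbar)
    (hr : ∀ s a s', |r s a s'| ≤ rbar) (s : S) (N : ℕ) :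
    M.v π r s - M.v π' r s
      = (∑ i ∈ Finset.range N, M.γ ^ i * ∑ s', M.stepDist π s i s'
          * (∑ a, π.prob s' a * M.adv π' r s' a))
        + M.γ ^ N * ∑ s', M.stepDist π s N s' * (M.v π r s' - M.v π' r s') := by
  induction N with
  | zero =>
      simp [stepDist, ite_mul]
  | succ N ih =>
      rw [ih, Finset.sum_range_succ]
      have step : ∑ s', M.stepDist π s N s' * (M.v π r s' - M.v π' r s')
          = (∑ s', M.stepDist π s N s' * (∑ a, π.prob s' a * M.adv π' r s' a))
            + M.γ * ∑ s', M.stepDist π s (N + 1) s' * (M.v π r s' - M.v π' r s') := by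
        have e1 : ∀ s', M.stepDist π s N s' * (M.v π r s' - M.v π' r s')
            = M.stepDist π s N s' * (∑ a, π.prob s' a * M.adv π' r s' a)
              + M.γ * (M.stepDist π s N s'
                * ∑ s₁, M.kernel π s' s₁ * (M.v π r s₁ - M.v π' r s₁)) := by
          intro s'
          rw [M.diff_rec π π' r rbar hrb hr s']
          ring
        rw [Finset.sum_congr rfl fun s' _ => e1 s', Finset.sum_add_distrib, ← Finset.mul_sum]
        congr 2
        have e2 : ∀ s₁, M.stepDist π s (N + 1) s₁ * (M.v π r s₁ - M.v π' r s₁)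
            = ∑ s', M.stepDist π s N s' * M.kernel π s' s₁ * (M.v π r s₁ - M.v π' r s₁) := by
          intro s₁
          rw [M.stepDist_succ_right π s N s₁, Finset.sum_mul]
        rw [Finset.sum_congr rfl fun s₁ _ => e2 s₁, Finset.sum_comm]
        refine Finset.sum_congr rfl fun s' _ => ?_
        rw [Finset.mul_sum]
        exact Finset.sum_congr rfl fun s₁ _ => by ring
      rw [step]
      ring

end MDP
namespace MDP
variable (M : MDP S A) (π : Policy S A)

lemma abs_stepDist_wsum_le (s : S) (i : ℕ) (X : S → ℝ) (B : ℝ)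
    (hX : ∀ s', |X s'| ≤ B) : |∑ s', M.stepDist π s i s' * X s'| ≤ B := by
  calc |∑ s', M.stepDist π s i s' * X s'| ≤ ∑ s', |M.stepDist π s i s' * X s'| :=
        Finset.abs_sum_le_sum_abs _ _
    _ ≤ ∑ s', M.stepDist π s i s' * B := by
        refine Finset.sum_le_sum fun s' _ => ?_
        rw [abs_mul, abs_of_nonneg (M.stepDist_nonneg π s i s')]
        exact mul_le_mul_of_nonneg_left (hX s') (M.stepDist_nonneg π s i s')
    _ = B := by rw [← Finset.sum_mul, M.stepDist_sum_one, one_mul]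

lemma stepDist_wsum_le (s : S) (i : ℕ) (X : S → ℝ) (B : ℝ)
    (hX : ∀ s', X s' ≤ B) : ∑ s', M.stepDist π s i s' * X s' ≤ B := by
  calc ∑ s', M.stepDist π s i s' * X s' ≤ ∑ s', M.stepDist π s i s' * B :=
        Finset.sum_le_sum fun s' _ =>
          mul_le_mul_of_nonneg_left (hX s') (M.stepDist_nonneg π s i s')
    _ = B := by rw [← Finset.sum_mul, M.stepDist_sum_one, one_mul]

lemma abs_advsum_le (π' : Policy S A) (r : S → A → S → ℝ) (rbar : ℝ) (hrb : 0 ≤ rbar)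
    (hr : ∀ s a s', |r s a s'| ≤ rbar) (s' : S) :
    |∑ a, π.prob s' a * M.adv π' r s' a| ≤ 2 * rbar := by
  calc |∑ a, π.prob s' a * M.adv π' r s' a| ≤ ∑ a, |π.prob s' a * M.adv π' r s' a| :=
        Finset.abs_sum_le_sum_abs _ _
    _ ≤ ∑ a, π.prob s' a * (2 * rbar) := by
        refine Finset.sum_le_sum fun a _ => ?_
        rw [abs_mul, abs_of_nonneg (π.nonneg _ _)]
        refine mul_le_mul_of_nonneg_left ?_ (π.nonneg _ _)
        calc |M.adv π' r s' a| ≤ |M.q π' r s' a| + |M.v π' r s'| := abs_sub _ _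
          _ ≤ rbar + rbar := add_le_add (M.abs_q_le π' r rbar hrb hr s' a)
              (M.abs_v_le π' r rbar hrb hr s')
          _ = 2 * rbar := by ring
    _ = 2 * rbar := by rw [← Finset.sum_mul, π.sum_one, one_mul]

/-- Performance difference lemma. -/
lemma pdl (π' : Policy S A) (r : S → A → S → ℝ) (rbar : ℝ) (hrb : 0 ≤ rbar)
    (hr : ∀ s a s', |r s a s'| ≤ rbar) (s : S) :
    M.v π r s - M.v π' r s
      = ∑' i, M.γ ^ i * ∑ s', M.stepDist π s i s'
          * (∑ a, π.prob s' a * M.adv π' r s' a) := by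
  set f : ℕ → ℝ := fun i => M.γ ^ i * ∑ s', M.stepDist π s i s'
      * (∑ a, π.prob s' a * M.adv π' r s' a) with hf
  have hDabs : ∀ s', |M.v π r s' - M.v π' r s'| ≤ 2 * rbar := by
    intro s'
    calc |M.v π r s' - M.v π' r s'| ≤ |M.v π r s'| + |M.v π' r s'| := abs_sub _ _
      _ ≤ rbar + rbar := add_le_add (M.abs_v_le π r rbar hrb hr s')
          (M.abs_v_le π' r rbar hrb hr s')
      _ = 2 * rbar := by ring
  have hsum : Summable f :=
    M.summable_geom_mul (2 * rbar) fun i =>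
      M.abs_stepDist_wsum_le π s i _ (2 * rbar) fun s' =>
        M.abs_advsum_le π π' r rbar hrb hr s'
  have hpart : ∀ N, ∑ i ∈ Finset.range N, f i
      = (M.v π r s - M.v π' r s)
        - M.γ ^ N * ∑ s', M.stepDist π s N s' * (M.v π r s' - M.v π' r s') := by
    intro N
    have := M.unroll π π' r rbar hrb hr s N
    linarith
  have hzero : Filter.Tendsto
      (fun N => M.γ ^ N * ∑ s', M.stepDist π s N s' * (M.v π r s' - M.v π' r s'))
      Filter.atTop (nhds 0) := by
    refine squeeze_zero_norm (a := fun N => M.γ ^ N * (2 * rbar)) (fun N => ?_) ?_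
    · rw [Real.norm_eq_abs, abs_mul, abs_of_nonneg (pow_nonneg M.γ_nonneg N)]
      exact mul_le_mul_of_nonneg_left
        (M.abs_stepDist_wsum_le π s N _ (2 * rbar) hDabs) (pow_nonneg M.γ_nonneg N)
    · simpa using (tendsto_pow_atTop_nhds_zero_of_lt_one M.γ_nonneg M.γ_lt_one).mul_const
        (2 * rbar)
  have htend : Filter.Tendsto (fun N => ∑ i ∈ Finset.range N, f i) Filter.atTop
      (nhds (M.v π r s - M.v π' r s)) := by
    simp only [hpart]
    have := Filter.Tendsto.sub
      (tendsto_const_nhds (x := M.v π r s - M.v π' r s) (f := Filter.atTop)) hzero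
    simpa using this
  exact ((hsum.hasSum_iff_tendsto_nat.mpr htend).tsum_eq).symm

end MDP

/-- **CFR cumulative full regret bound** in discounted continuing MDPs: if the state-local
cumulative advantages are bounded by `C` at every state and action, then the cumulative
full regret from the initial state distribution against any stationary policy `π` is at
most `C / (1 - γ)`. -/
theorem cfr_cumulative_regret_bound
    (M : MDP S A) (T : ℕ) (πs : Fin T → Policy S A)
    (rbar : ℝ) (hrbar : 0 < rbar)
    (rs : Fin T → S → A → S → ℝ) (hr : ∀ t s a s', |rs t s a s'| ≤ rbar)
    (C : ℝ) (hC : ∀ (s : S) (a : A), ∑ t : Fin T, M.adv (πs t) (rs t) s a ≤ C)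
    (π : Policy S A) :
    ∑ t : Fin T, (M.vInit π (rs t) - M.vInit (πs t) (rs t)) ≤ C / (1 - M.γ) := by
  
  have hγ : (0:ℝ) < 1 - M.γ := by linarith [M.γ_lt_one]
  have hrb : (0:ℝ) ≤ rbar := hrbar.le
  have key : ∀ s : S, ∑ t : Fin T, (M.v π (rs t) s - M.v (πs t) (rs t) s)
      ≤ C / (1 - M.γ) := by
    intro s
    have hsummand : ∀ t : Fin T, Summable (fun i => M.γ ^ i * ∑ s', M.stepDist π s i s'
        * (∑ a, π.prob s' a * M.adv (πs t) (rs t) s' a)) := fun t =>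
      M.summable_geom_mul (2 * rbar) fun i =>
        M.abs_stepDist_wsum_le π s i _ (2 * rbar) fun s' =>
          M.abs_advsum_le π (πs t) (rs t) rbar hrb (hr t) s'
    have hδC : ∀ s', ∑ t : Fin T, (∑ a, π.prob s' a * M.adv (πs t) (rs t) s' a) ≤ C := by
      intro s'
      rw [show (∑ t : Fin T, ∑ a, π.prob s' a * M.adv (πs t) (rs t) s' a)
          = ∑ a, ∑ t : Fin T, π.prob s' a * M.adv (πs t) (rs t) s' a from Finset.sum_comm]
      calc ∑ a, ∑ t : Fin T, π.prob s' a * M.adv (πs t) (rs t) s' a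
          = ∑ a, π.prob s' a * ∑ t : Fin T, M.adv (πs t) (rs t) s' a := by
            exact Finset.sum_congr rfl fun a _ => (Finset.mul_sum _ _ _).symm
        _ ≤ ∑ a, π.prob s' a * C := Finset.sum_le_sum fun a _ =>
            mul_le_mul_of_nonneg_left (hC s' a) (π.nonneg _ _)
        _ = C := by rw [← Finset.sum_mul, π.sum_one, one_mul]
    calc ∑ t : Fin T, (M.v π (rs t) s - M.v (πs t) (rs t) s)
        = ∑ t : Fin T, ∑' i, M.γ ^ i * ∑ s', M.stepDist π s i s'
            * (∑ a, π.prob s' a * M.adv (πs t) (rs t) s' a) :=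
          Finset.sum_congr rfl fun t _ => M.pdl π (πs t) (rs t) rbar hrb (hr t) s
      _ = ∑' i, ∑ t : Fin T, M.γ ^ i * ∑ s', M.stepDist π s i s'
            * (∑ a, π.prob s' a * M.adv (πs t) (rs t) s' a) :=
          (Summable.tsum_finsetSum fun t _ => hsummand t).symm
      _ = ∑' i, M.γ ^ i * ∑ s', M.stepDist π s i s'
            * ∑ t : Fin T, (∑ a, π.prob s' a * M.adv (πs t) (rs t) s' a) := by
          refine tsum_congr fun i => ?_
          rw [← Finset.mul_sum]
          congr 1
          rw [show (∑ t : Fin T, ∑ s', M.stepDist π s i s'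
              * (∑ a, π.prob s' a * M.adv (πs t) (rs t) s' a))
              = ∑ s', ∑ t : Fin T, M.stepDist π s i s'
                * (∑ a, π.prob s' a * M.adv (πs t) (rs t) s' a) from Finset.sum_comm]
          exact Finset.sum_congr rfl fun s' _ => (Finset.mul_sum _ _ _).symm
      _ ≤ ∑' i : ℕ, M.γ ^ i * C := by
          refine Summable.tsum_le_tsum (fun i => ?_) ?_ ?_
          · refine mul_le_mul_of_nonneg_left ?_ (pow_nonneg M.γ_nonneg i)
            exact M.stepDist_wsum_le π s i _ C hδC
          · refine M.summable_geom_mul ((T : ℝ) * (2 * rbar)) fun i => ?_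
            refine M.abs_stepDist_wsum_le π s i _ _ fun s' => ?_
            calc |∑ t : Fin T, ∑ a, π.prob s' a * M.adv (πs t) (rs t) s' a|
                ≤ ∑ t : Fin T, |∑ a, π.prob s' a * M.adv (πs t) (rs t) s' a| :=
                  Finset.abs_sum_le_sum_abs _ _
              _ ≤ ∑ _t : Fin T, 2 * rbar := Finset.sum_le_sum fun t _ =>
                  M.abs_advsum_le π (πs t) (rs t) rbar hrb (hr t) s'
              _ = (T : ℝ) * (2 * rbar) := by simp [Finset.sum_const, mul_comm]
          · exact (summable_geometric_of_lt_one M.γ_nonneg M.γ_lt_one).mul_right C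
      _ = C / (1 - M.γ) := by
          rw [tsum_mul_right, tsum_geometric_of_lt_one M.γ_nonneg M.γ_lt_one,
            div_eq_inv_mul, mul_comm]
  calc ∑ t : Fin T, (M.vInit π (rs t) - M.vInit (πs t) (rs t))
      = ∑ t : Fin T, ∑ s, M.d0 s * (M.v π (rs t) s - M.v (πs t) (rs t) s) := by
        refine Finset.sum_congr rfl fun t _ => ?_
        rw [MDP.vInit, MDP.vInit, ← Finset.sum_sub_distrib]
        exact Finset.sum_congr rfl fun s _ => by ring
    _ = ∑ s, M.d0 s * ∑ t : Fin T, (M.v π (rs t) s - M.v (πs t) (rs t) s) := by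
        rw [Finset.sum_comm]
        exact Finset.sum_congr rfl fun s _ => (Finset.mul_sum _ _ _).symm
    _ ≤ ∑ s, M.d0 s * (C / (1 - M.γ)) := Finset.sum_le_sum fun s _ =>
        mul_le_mul_of_nonneg_left (key s) (M.d0_nonneg s)
    _ = C / (1 - M.γ) := by rw [← Finset.sum_mul, M.d0_sum_one, one_mul]
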